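/- arXiv:1912.06734 — 5 statements merged into one kernel-verified Lean document; each statement's English description precedes it below -/
import Mathlib

section
/- Positive definiteness of the Riccati innovation matrices (Lemma 3.4(i)): Assume SOSC. Then for every k = 0,…,N−1 the matrix W_k = R_k + B_kᵀK_{k+1}B_k appearing in the Riccati recursion is symmetric positive definite. -/
open Matrix BigOperators Finset

/-- Homogeneous feasibility: `p_0 = 0` and `p_{k+1} = A_k p_k + B_k q_k` for `k < N`. -/
def HomFeas {nx nu : ℕ} (N : ℕ)
    (A : ℕ → Matrix (Fin nx) (Fin nx) ℝ) (B : ℕ → Matrix (Fin nx) (Fin nu) ℝ)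
    (p : ℕ → Fin nx → ℝ) (q : ℕ → Fin nu → ℝ) : Prop :=
  p 0 = 0 ∧ ∀ k < N, p (k + 1) = A k *ᵥ p k + B k *ᵥ q k

/-- The homogeneous quadratic objective
`Σ_{k<N} (p_kᵀQ_kp_k + 2q_kᵀS_kp_k + q_kᵀR_kq_k) + p_NᵀQ_Np_N`. -/
noncomputable def homObj {nx nu : ℕ} (N : ℕ)
    (Q : ℕ → Matrix (Fin nx) (Fin nx) ℝ) (R : ℕ → Matrix (Fin nu) (Fin nu) ℝ)
    (S : ℕ → Matrix (Fin nu) (Fin nx) ℝ)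
    (p : ℕ → Fin nx → ℝ) (q : ℕ → Fin nu → ℝ) : ℝ :=
  (∑ k ∈ range N,
      (p k ⬝ᵥ Q k *ᵥ p k + 2 * (q k ⬝ᵥ S k *ᵥ p k) + q k ⬝ᵥ R k *ᵥ q k))
    + p N ⬝ᵥ Q N *ᵥ p N

/-- SOSC: the homogeneous objective is positive on every nonzero feasible trajectory. -/
def SOSC {nx nu : ℕ} (N : ℕ)
    (A : ℕ → Matrix (Fin nx) (Fin nx) ℝ) (B : ℕ → Matrix (Fin nx) (Fin nu) ℝ)
    (Q : ℕ → Matrix (Fin nx) (Fin nx) ℝ) (R : ℕ → Matrix (Fin nu) (Fin nu) ℝ)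
    (S : ℕ → Matrix (Fin nu) (Fin nx) ℝ) : Prop :=
  ∀ p q, HomFeas N A B p q →
    ¬ ((∀ k ≤ N, p k = 0) ∧ (∀ k < N, q k = 0)) →
    0 < homObj N Q R S p q

/-!
Fix `k < N` and `v ≠ 0`. Run the dynamics from `p₀ = 0` with zero control before time `k`,
control `v` at time `k`, and the Riccati feedback `q_j = P_j p_j` afterwards. Completing the
square stage by stage shows that the feedback tail costs exactly `p_{k+1}ᵀ K_{k+1} p_{k+1}`,
so the whole trajectory costs `vᵀ R_k v + (B_k v)ᵀ K_{k+1} (B_k v) = vᵀ W_k v`, which SOSC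
makes positive.

Completing the square only uses `W⁻¹ W W⁻¹ = W⁻¹`, which also holds for the junk inverse `0`
of a singular matrix; so no induction over the positive definiteness of the later `W_j` is
needed, only a backward induction for the symmetry of the `K_j`.
-/
namespace Matrix

variable {l m n α : Type*} [CommRing α] [Fintype m]

lemma nonsing_inv_mul_mul_nonsing_inv [DecidableEq m] (A : Matrix m m α) :
    A⁻¹ * A * A⁻¹ = A⁻¹ := by
  by_cases h : IsUnit A.det
  · rw [nonsing_inv_mul A h, Matrix.one_mul]
  · rw [nonsing_inv_apply_not_isUnit A h, Matrix.zero_mul, Matrix.zero_mul]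

lemma IsSymm.transpose_mul_mul {K : Matrix m m α} (hK : K.IsSymm) (B : Matrix m n α) :
    (Bᵀ * K * B).IsSymm := by
  simp only [IsSymm, transpose_mul, transpose_transpose, hK.eq, Matrix.mul_assoc]

lemma mulVec_dotProduct_mulVec [Fintype n] [Fintype l] (B : Matrix m n α) (K : Matrix m m α)
    (C : Matrix m l α) (x : n → α) (y : l → α) :
    B *ᵥ x ⬝ᵥ K *ᵥ (C *ᵥ y) = x ⬝ᵥ (Bᵀ * K * C) *ᵥ y := by
  rw [dotProduct_comm, ← dotProduct_transpose_mulVec, ← mulVec_mulVec, ← mulVec_mulVec]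

end Matrix

section StageCost

variable {m n α : Type*} [Fintype m] [Fintype n] [CommRing α]
  {A K Q : Matrix m m α} {B : Matrix m n α} {R : Matrix n n α} {S : Matrix n m α}

lemma stage_add_value_eq (hK : K.IsSymm) (x : m → α) (q : n → α) :
    x ⬝ᵥ Q *ᵥ x + 2 * (q ⬝ᵥ S *ᵥ x) + q ⬝ᵥ R *ᵥ q
        + (A *ᵥ x + B *ᵥ q) ⬝ᵥ K *ᵥ (A *ᵥ x + B *ᵥ q)
      = x ⬝ᵥ (Q + Aᵀ * K * A) *ᵥ x + 2 * (q ⬝ᵥ (Bᵀ * K * A + S) *ᵥ x)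
        + q ⬝ᵥ (R + Bᵀ * K * B) *ᵥ q := by
  have hcross : x ⬝ᵥ (Aᵀ * K * B) *ᵥ q = q ⬝ᵥ (Bᵀ * K * A) *ᵥ x := by
    rw [← dotProduct_transpose_mulVec]
    simp only [transpose_mul, transpose_transpose, hK.eq, Matrix.mul_assoc]
  simp only [mulVec_add, dotProduct_add, add_dotProduct, add_mulVec,
    mulVec_dotProduct_mulVec, hcross]
  ring

lemma feedback_quadratic_eq [DecidableEq n] {W : Matrix n n α} (hW : W.IsSymm)
    (M : Matrix n m α) (x : m → α) :
    2 * (-(W⁻¹ * M) *ᵥ x ⬝ᵥ M *ᵥ x) + -(W⁻¹ * M) *ᵥ x ⬝ᵥ W *ᵥ (-(W⁻¹ * M) *ᵥ x)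
      = -(x ⬝ᵥ (Mᵀ * W⁻¹ * M) *ᵥ x) := by
  have hWinv : W⁻¹ᵀ = W⁻¹ := hW.inv.eq
  have hlin : -(W⁻¹ * M) *ᵥ x ⬝ᵥ M *ᵥ x = -(x ⬝ᵥ (Mᵀ * W⁻¹ * M) *ᵥ x) := by
    rw [← Matrix.one_mulVec (M *ᵥ x), mulVec_dotProduct_mulVec]
    simp only [transpose_neg, transpose_mul, hWinv, Matrix.mul_one, Matrix.neg_mul, neg_mulVec,
      dotProduct_neg, Matrix.mul_assoc]
  have hquad : -(W⁻¹ * M) *ᵥ x ⬝ᵥ W *ᵥ (-(W⁻¹ * M) *ᵥ x) = x ⬝ᵥ (Mᵀ * W⁻¹ * M) *ᵥ x := by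
    rw [mulVec_dotProduct_mulVec, transpose_neg, Matrix.neg_mul, Matrix.mul_neg, Matrix.neg_mul,
      neg_neg, transpose_mul, hWinv, Matrix.mul_assoc Mᵀ, Matrix.mul_assoc Mᵀ,
      ← Matrix.mul_assoc (W⁻¹ * W), nonsing_inv_mul_mul_nonsing_inv, Matrix.mul_assoc]
  rw [hlin, hquad]
  ring

end StageCost

structure IsRiccatiSolution {nx nu : ℕ} (N : ℕ)
    (A : ℕ → Matrix (Fin nx) (Fin nx) ℝ) (B : ℕ → Matrix (Fin nx) (Fin nu) ℝ)
    (Q : ℕ → Matrix (Fin nx) (Fin nx) ℝ) (R : ℕ → Matrix (Fin nu) (Fin nu) ℝ)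
    (S : ℕ → Matrix (Fin nu) (Fin nx) ℝ)
    (K : ℕ → Matrix (Fin nx) (Fin nx) ℝ) (W : ℕ → Matrix (Fin nu) (Fin nu) ℝ) : Prop where
  terminal : K N = Q N
  W_eq : ∀ k < N, W k = R k + (B k)ᵀ * K (k + 1) * B k
  K_eq : ∀ k < N, K k =
    Q k + (A k)ᵀ * K (k + 1) * A k
      - ((B k)ᵀ * K (k + 1) * A k + S k)ᵀ * (W k)⁻¹ * ((B k)ᵀ * K (k + 1) * A k + S k)

section LQ

variable {nx nu N : ℕ}
  {A : ℕ → Matrix (Fin nx) (Fin nx) ℝ} {B : ℕ → Matrix (Fin nx) (Fin nu) ℝ}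
  {Q : ℕ → Matrix (Fin nx) (Fin nx) ℝ} {R : ℕ → Matrix (Fin nu) (Fin nu) ℝ}
  {S : ℕ → Matrix (Fin nu) (Fin nx) ℝ}
  {K : ℕ → Matrix (Fin nx) (Fin nx) ℝ} {W : ℕ → Matrix (Fin nu) (Fin nu) ℝ}

/-- The Riccati feedback gain `P_k`. -/
noncomputable def riccatiGain (A : ℕ → Matrix (Fin nx) (Fin nx) ℝ)
    (B : ℕ → Matrix (Fin nx) (Fin nu) ℝ) (S : ℕ → Matrix (Fin nu) (Fin nx) ℝ)
    (K : ℕ → Matrix (Fin nx) (Fin nx) ℝ) (W : ℕ → Matrix (Fin nu) (Fin nu) ℝ) (k : ℕ) :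
    Matrix (Fin nu) (Fin nx) ℝ :=
  -((W k)⁻¹ * ((B k)ᵀ * K (k + 1) * A k + S k))

noncomputable def stageCost (Q : ℕ → Matrix (Fin nx) (Fin nx) ℝ)
    (R : ℕ → Matrix (Fin nu) (Fin nu) ℝ) (S : ℕ → Matrix (Fin nu) (Fin nx) ℝ)
    (p : ℕ → Fin nx → ℝ) (q : ℕ → Fin nu → ℝ) (k : ℕ) : ℝ :=
  p k ⬝ᵥ Q k *ᵥ p k + 2 * (q k ⬝ᵥ S k *ᵥ p k) + q k ⬝ᵥ R k *ᵥ q k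

noncomputable def costFrom (N : ℕ) (Q : ℕ → Matrix (Fin nx) (Fin nx) ℝ)
    (R : ℕ → Matrix (Fin nu) (Fin nu) ℝ) (S : ℕ → Matrix (Fin nu) (Fin nx) ℝ)
    (p : ℕ → Fin nx → ℝ) (q : ℕ → Fin nu → ℝ) (k : ℕ) : ℝ :=
  ∑ j ∈ Ico k N, stageCost Q R S p q j + p N ⬝ᵥ Q N *ᵥ p N

lemma homObj_eq_costFrom_zero (p : ℕ → Fin nx → ℝ) (q : ℕ → Fin nu → ℝ) :
    homObj N Q R S p q = costFrom N Q R S p q 0 := by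
  rw [homObj, costFrom, range_eq_Ico]
  rfl

lemma costFrom_of_lt (p : ℕ → Fin nx → ℝ) (q : ℕ → Fin nu → ℝ) {k : ℕ} (hk : k < N) :
    costFrom N Q R S p q k = stageCost Q R S p q k + costFrom N Q R S p q (k + 1) := by
  rw [costFrom, costFrom, sum_eq_sum_Ico_succ_bot hk, add_assoc]

lemma costFrom_zero_of_stageCost_eq_zero (p : ℕ → Fin nx → ℝ) (q : ℕ → Fin nu → ℝ) {k : ℕ}
    (hk : k ≤ N) (hzero : ∀ j < k, stageCost Q R S p q j = 0) :
    costFrom N Q R S p q 0 = costFrom N Q R S p q k := by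
  rw [costFrom, costFrom, ← sum_Ico_consecutive _ k.zero_le hk,
    sum_eq_zero fun j hj => hzero j (mem_Ico.1 hj).2, zero_add]

namespace IsRiccatiSolution

lemma isSymm_K (hric : IsRiccatiSolution N A B Q R S K W) (hQ : ∀ k ≤ N, (Q k).IsSymm)
    (hR : ∀ k < N, (R k).IsSymm) {k : ℕ} (hk : k ≤ N) : (K k).IsSymm := by
  induction hk using Nat.decreasingInduction with
  | self => exact hric.terminal ▸ hQ N le_rfl
  | of_succ k hk hK =>
    have hW : (W k).IsSymm := hric.W_eq k hk ▸ (hR k hk).add (hK.transpose_mul_mul _)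
    rw [hric.K_eq k hk]
    exact ((hQ k hk.le).add (hK.transpose_mul_mul _)).sub (hW.inv.transpose_mul_mul _)

lemma isSymm_W (hric : IsRiccatiSolution N A B Q R S K W) (hQ : ∀ k ≤ N, (Q k).IsSymm)
    (hR : ∀ k < N, (R k).IsSymm) {k : ℕ} (hk : k < N) : (W k).IsSymm :=
  hric.W_eq k hk ▸ (hR k hk).add ((hric.isSymm_K hQ hR hk).transpose_mul_mul _)

lemma costFrom_eq_of_feedback (hric : IsRiccatiSolution N A B Q R S K W)
    (hQ : ∀ k ≤ N, (Q k).IsSymm) (hR : ∀ k < N, (R k).IsSymm)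
    (p : ℕ → Fin nx → ℝ) (q : ℕ → Fin nu → ℝ) {k : ℕ} (hk : k ≤ N)
    (hdyn : ∀ j, k ≤ j → j < N → p (j + 1) = A j *ᵥ p j + B j *ᵥ q j)
    (hq : ∀ j, k ≤ j → j < N → q j = riccatiGain A B S K W j *ᵥ p j) :
    costFrom N Q R S p q k = p k ⬝ᵥ K k *ᵥ p k := by
  induction hk using Nat.decreasingInduction with
  | self => simp [costFrom, hric.terminal]
  | of_succ k hk ih =>
    rw [costFrom_of_lt p q hk, ih (fun j hj => hdyn j (by omega)) (fun j hj => hq j (by omega)),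
      hdyn k le_rfl hk, stageCost, hq k le_rfl hk, riccatiGain,
      stage_add_value_eq (hric.isSymm_K hQ hR hk), ← hric.W_eq k hk, add_assoc,
      feedback_quadratic_eq (hric.isSymm_W hQ hR hk), hric.K_eq k hk, sub_mulVec, dotProduct_sub,
      sub_eq_add_neg]

end IsRiccatiSolution

noncomputable def closedLoop (A : ℕ → Matrix (Fin nx) (Fin nx) ℝ)
    (B : ℕ → Matrix (Fin nx) (Fin nu) ℝ) (u : ℕ → (Fin nx → ℝ) → Fin nu → ℝ) :
    ℕ → Fin nx → ℝ
  | 0 => 0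
  | j + 1 => A j *ᵥ closedLoop A B u j + B j *ᵥ u j (closedLoop A B u j)

lemma homFeas_closedLoop (u : ℕ → (Fin nx → ℝ) → Fin nu → ℝ) :
    HomFeas N A B (closedLoop A B u) (fun j => u j (closedLoop A B u j)) :=
  ⟨rfl, fun _ _ => rfl⟩

lemma closedLoop_eq_zero {u : ℕ → (Fin nx → ℝ) → Fin nu → ℝ} {k : ℕ}
    (hu : ∀ j < k, u j 0 = 0) : ∀ j ≤ k, closedLoop A B u j = 0 := by
  intro j hj
  induction j with
  | zero => rfl
  | succ j ih => simp [closedLoop, ih (by omega), hu j (by omega)]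

noncomputable def impulsePolicy (A : ℕ → Matrix (Fin nx) (Fin nx) ℝ)
    (B : ℕ → Matrix (Fin nx) (Fin nu) ℝ) (S : ℕ → Matrix (Fin nu) (Fin nx) ℝ)
    (K : ℕ → Matrix (Fin nx) (Fin nx) ℝ) (W : ℕ → Matrix (Fin nu) (Fin nu) ℝ)
    (k : ℕ) (v : Fin nu → ℝ) : ℕ → (Fin nx → ℝ) → Fin nu → ℝ :=
  fun j x => riccatiGain A B S K W j *ᵥ x + if j = k then v else 0

lemma closedLoop_impulsePolicy_eq_zero (k : ℕ) (v : Fin nu → ℝ) :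
    ∀ j ≤ k, closedLoop A B (impulsePolicy A B S K W k v) j = 0 :=
  closedLoop_eq_zero fun j hj => by simp [impulsePolicy, hj.ne]

namespace IsRiccatiSolution

lemma homObj_impulsePolicy (hric : IsRiccatiSolution N A B Q R S K W)
    (hQ : ∀ k ≤ N, (Q k).IsSymm) (hR : ∀ k < N, (R k).IsSymm) {k : ℕ} (hk : k < N)
    (v : Fin nu → ℝ) :
    let u := impulsePolicy A B S K W k v
    homObj N Q R S (closedLoop A B u) (fun j => u j (closedLoop A B u j)) = v ⬝ᵥ W k *ᵥ v := by
  intro u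
  set p := closedLoop A B u
  set q := fun j => u j (p j)
  have hp : ∀ j ≤ k, p j = 0 := closedLoop_impulsePolicy_eq_zero k v
  have hq : ∀ j < k, q j = 0 := fun j hj => by simp [q, u, impulsePolicy, hp j hj.le, hj.ne]
  have hqk : q k = v := by simp [q, u, impulsePolicy, hp k le_rfl]
  have hpk : p (k + 1) = B k *ᵥ v := by
    rw [show p (k + 1) = A k *ᵥ p k + B k *ᵥ q k from rfl, hp k le_rfl, hqk, mulVec_zero,
      zero_add]
  calc homObj N Q R S p q
      = costFrom N Q R S p q k := by
        rw [homObj_eq_costFrom_zero, costFrom_zero_of_stageCost_eq_zero p q hk.le]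
        intro j hj
        simp [stageCost, hp j hj.le, hq j hj]
    _ = stageCost Q R S p q k + p (k + 1) ⬝ᵥ K (k + 1) *ᵥ p (k + 1) := by
        rw [costFrom_of_lt p q hk, hric.costFrom_eq_of_feedback hQ hR p q hk
          (fun _ _ _ => rfl) fun j hj _ => ?_]
        simp [q, u, impulsePolicy, (show j ≠ k by omega)]
    _ = v ⬝ᵥ W k *ᵥ v := by
        rw [stageCost, hp k le_rfl, hqk, hpk, mulVec_dotProduct_mulVec, hric.W_eq k hk,
          add_mulVec, dotProduct_add]
        simp

lemma posDef_W (hric : IsRiccatiSolution N A B Q R S K W)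
    (hQ : ∀ k ≤ N, (Q k).IsSymm) (hR : ∀ k < N, (R k).IsSymm) (hsosc : SOSC N A B Q R S)
    {k : ℕ} (hk : k < N) : (W k).PosDef := by
  refine PosDef.of_dotProduct_mulVec_pos (isHermitian_iff_isSymm.2 (hric.isSymm_W hQ hR hk))
    fun v hv => ?_
  have hpos := hsosc _ _ (homFeas_closedLoop (impulsePolicy A B S K W k v)) fun h0 => hv ?_
  · rwa [hric.homObj_impulsePolicy hQ hR hk v, ← star_trivial v] at hpos
  · simpa [impulsePolicy, closedLoop_impulsePolicy_eq_zero k v k le_rfl] using h0.2 k hk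

end IsRiccatiSolution

end LQ

theorem riccati_W_posdef_general
    (N nx nu : ℕ)
    (A : ℕ → Matrix (Fin nx) (Fin nx) ℝ) (B : ℕ → Matrix (Fin nx) (Fin nu) ℝ)
    (Q : ℕ → Matrix (Fin nx) (Fin nx) ℝ) (R : ℕ → Matrix (Fin nu) (Fin nu) ℝ)
    (S : ℕ → Matrix (Fin nu) (Fin nx) ℝ)
    (hQsymm : ∀ k ≤ N, (Q k).IsSymm) (hRsymm : ∀ k < N, (R k).IsSymm)
    (hsosc : SOSC N A B Q R S)
    (K : ℕ → Matrix (Fin nx) (Fin nx) ℝ) (W : ℕ → Matrix (Fin nu) (Fin nu) ℝ)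
    (hKN : K N = Q N)
    (hW : ∀ k < N, W k = R k + (B k)ᵀ * K (k + 1) * B k)
    (hK : ∀ k < N, K k =
      Q k + (A k)ᵀ * K (k + 1) * A k
        - ((B k)ᵀ * K (k + 1) * A k + S k)ᵀ * (W k)⁻¹ * ((B k)ᵀ * K (k + 1) * A k + S k)) :
    ∀ k < N, (W k).IsSymm ∧ (W k).PosDef := by
  have hric : IsRiccatiSolution N A B Q R S K W := ⟨hKN, hW, hK⟩
  exact fun k hk =>
    ⟨hric.isSymm_W hQsymm hRsymm hk, hric.posDef_W hQsymm hRsymm hsosc hk⟩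

/-- **Positive definiteness of the Riccati innovation matrices (Lemma 3.4(i)).**
Under SOSC, every `W_k = R_k + B_kᵀK_{k+1}B_k` is symmetric positive definite. -/
theorem riccati_W_posdef
    (N nx nu : ℕ) (hN : 1 ≤ N) (hnx : 1 ≤ nx) (hnu : 1 ≤ nu)
    (A : ℕ → Matrix (Fin nx) (Fin nx) ℝ) (B : ℕ → Matrix (Fin nx) (Fin nu) ℝ)
    (Q : ℕ → Matrix (Fin nx) (Fin nx) ℝ) (R : ℕ → Matrix (Fin nu) (Fin nu) ℝ)
    (S : ℕ → Matrix (Fin nu) (Fin nx) ℝ)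
    (hQsymm : ∀ k ≤ N, (Q k).IsSymm) (hRsymm : ∀ k < N, (R k).IsSymm)
    (hsosc : SOSC N A B Q R S)
    (K : ℕ → Matrix (Fin nx) (Fin nx) ℝ) (W : ℕ → Matrix (Fin nu) (Fin nu) ℝ)
    (hKN : K N = Q N)
    (hW : ∀ k < N, W k = R k + (B k)ᵀ * K (k + 1) * B k)
    (hK : ∀ k < N, K k =
      Q k + (A k)ᵀ * K (k + 1) * A k
        - ((B k)ᵀ * K (k + 1) * A k + S k)ᵀ * (W k)⁻¹ * ((B k)ᵀ * K (k + 1) * A k + S k)) :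
    ∀ k < N, (W k).IsSymm ∧ (W k).PosDef :=
  riccati_W_posdef_general N nx nu A B Q R S hQsymm hRsymm hsosc K W hKN hW hK
end

section
/- Shift-commutation of the convexification recursion (Claims 1 and 2 in the proof of Theorem 3.7): For δ ∈ ℝ, let Q_k^δ = Q_k − δI for k = 0,…,N, and let Q̄_k^δ(0), R̃_k^δ(0), S̃_k^δ(0), Q̃_k^δ(0) denote the output of the convexification recursion applied with parameter 0 to the shifted data (Q_k^δ, R_k, S_k, A_k, B_k), while Q̄_k(δ), R̃_k(δ), S̃_k(δ), Q̃_k(δ) denote the output applied with parameter δ to the original data. Then for all k: Q̄_k^δ(0) = Q̄_k(δ), R̃_k^δ(0) = R̃_k(δ), S̃_k^δ(0) = S̃_k(δ), and Q̃_k^δ(0) = Q̃_k(δ) − δI (unconditional algebraic identities, with the same total matrix-inverse operation used in both recursions). -/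
open Matrix BigOperators Finset

/-- **Shift-commutation of the convexification recursion (Claims 1 and 2 in the proof of
Theorem 3.7).**  Applying the recursion with parameter `0` to the shifted data
`Q_k^δ = Q_k − δI` gives the same output as applying the recursion with parameter `δ`
to the original data, except that `Q̃_k^δ(0) = Q̃_k(δ) − δI`. -/
theorem convexification_shift_commutation
    (N nx nu : ℕ) (hN : 1 ≤ N) (hnx : 1 ≤ nx) (hnu : 1 ≤ nu) (δ : ℝ)
    (A : ℕ → Matrix (Fin nx) (Fin nx) ℝ) (B : ℕ → Matrix (Fin nx) (Fin nu) ℝ)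
    (Q : ℕ → Matrix (Fin nx) (Fin nx) ℝ) (R : ℕ → Matrix (Fin nu) (Fin nu) ℝ)
    (S : ℕ → Matrix (Fin nu) (Fin nx) ℝ)
    (hQsymm : ∀ k ≤ N, (Q k).IsSymm) (hRsymm : ∀ k < N, (R k).IsSymm)
    -- recursion with parameter 0 applied to the shifted data (Q_k − δ I, R_k, S_k, A_k, B_k)
    (Qbar0 : ℕ → Matrix (Fin nx) (Fin nx) ℝ) (Rt0 : ℕ → Matrix (Fin nu) (Fin nu) ℝ)
    (St0 : ℕ → Matrix (Fin nu) (Fin nx) ℝ) (Qt0 : ℕ → Matrix (Fin nx) (Fin nx) ℝ)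
    (hQbar0N : Qbar0 N = (Q N - δ • (1 : Matrix (Fin nx) (Fin nx) ℝ))
      - (0 : ℝ) • (1 : Matrix (Fin nx) (Fin nx) ℝ))
    (hRt0 : ∀ k < N, Rt0 k = R k + (B k)ᵀ * Qbar0 (k + 1) * B k)
    (hSt0 : ∀ k < N, St0 k = S k + (B k)ᵀ * Qbar0 (k + 1) * A k)
    (hQt0 : ∀ k < N, Qt0 k = (St0 k)ᵀ * (Rt0 k)⁻¹ * St0 k
      + (0 : ℝ) • (1 : Matrix (Fin nx) (Fin nx) ℝ))
    (hQt0N : Qt0 N = (0 : ℝ) • (1 : Matrix (Fin nx) (Fin nx) ℝ))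
    (hQbar0 : ∀ k < N, Qbar0 k = (Q k - δ • (1 : Matrix (Fin nx) (Fin nx) ℝ))
      + (A k)ᵀ * Qbar0 (k + 1) * A k - Qt0 k)
    -- recursion with parameter δ applied to the original data
    (Qbard : ℕ → Matrix (Fin nx) (Fin nx) ℝ) (Rtd : ℕ → Matrix (Fin nu) (Fin nu) ℝ)
    (Std : ℕ → Matrix (Fin nu) (Fin nx) ℝ) (Qtd : ℕ → Matrix (Fin nx) (Fin nx) ℝ)
    (hQbardN : Qbard N = Q N - δ • (1 : Matrix (Fin nx) (Fin nx) ℝ))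
    (hRtd : ∀ k < N, Rtd k = R k + (B k)ᵀ * Qbard (k + 1) * B k)
    (hStd : ∀ k < N, Std k = S k + (B k)ᵀ * Qbard (k + 1) * A k)
    (hQtd : ∀ k < N, Qtd k = (Std k)ᵀ * (Rtd k)⁻¹ * Std k
      + δ • (1 : Matrix (Fin nx) (Fin nx) ℝ))
    (hQtdN : Qtd N = δ • (1 : Matrix (Fin nx) (Fin nx) ℝ))
    (hQbard : ∀ k < N, Qbard k = Q k + (A k)ᵀ * Qbard (k + 1) * A k - Qtd k) :
    (∀ k ≤ N, Qbar0 k = Qbard k) ∧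
    (∀ k < N, Rt0 k = Rtd k) ∧
    (∀ k < N, St0 k = Std k) ∧
    (∀ k ≤ N, Qt0 k = Qtd k - δ • (1 : Matrix (Fin nx) (Fin nx) ℝ)) := by

  have main : ∀ d k, k + d = N → Qbar0 k = Qbard k := by
    intro d
    induction d with
    | zero =>
      intro k hk
      simp at hk
      subst hk
      rw [hQbar0N, hQbardN]
      simp
    | succ d ih =>
      intro k hk
      have hkN : k < N := by omega
      have h1 : Qbar0 (k + 1) = Qbard (k + 1) := ih (k + 1) (by omega)
      rw [hQbar0 k hkN, hQbard k hkN, hQt0 k hkN, hQtd k hkN,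
        hRt0 k hkN, hRtd k hkN, hSt0 k hkN, hStd k hkN, h1]
      simp only [zero_smul, add_zero, sub_zero]
      abel
  have hQb : ∀ k ≤ N, Qbar0 k = Qbard k := fun k hk => main (N - k) k (by omega)
  have hR : ∀ k < N, Rt0 k = Rtd k := by
    intro k hk
    rw [hRt0 k hk, hRtd k hk, hQb (k+1) (by omega)]
  have hS : ∀ k < N, St0 k = Std k := by
    intro k hk
    rw [hSt0 k hk, hStd k hk, hQb (k+1) (by omega)]
  refine ⟨hQb, hR, hS, ?_⟩
  intro k hk
  rcases eq_or_lt_of_le hk with h | h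
  · subst h
    rw [hQt0N, hQtdN]
    simp
  · rw [hQt0 k h, hQtd k h, hR k h, hS k h]
    simp only [zero_smul, add_zero]
    abel
end

section
/- Quantitative Schur-complement lower bound (Lemma 5.5(ii)): Let A ∈ ℝ^{m×m} and C ∈ ℝ^{n×n} be symmetric real matrices, B ∈ ℝ^{n×m}, and let H = [[A, Bᵀ],[B, C]] ∈ ℝ^{(m+n)×(m+n)}. Suppose C ⪰ β_C I with β_C > 0, the Schur complement satisfies A − BᵀC⁻¹B ⪰ β_S I with β_S > 0, and ‖B‖ ≤ β_B. Then H ⪰ λ I with λ = (β_C/(β_C+β_B))² · min(β_S, β_C) > 0. -/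
open Matrix BigOperators

/-- The spectral (operator) norm of a real matrix. -/
noncomputable def opNorm {m n : Type*} [Fintype m] [Fintype n] [DecidableEq n]
    (A : Matrix m n ℝ) : ℝ :=
  ‖LinearMap.toContinuousLinearMap (Matrix.toEuclideanLin A)‖

/-!
Write `v = (x, y)` and `w = C⁻¹Bx`. The Schur factorisation of `H` gives
`vᵀHv = (w + y)ᵀC(w + y) + xᵀ(A - BᵀC⁻¹B)x ≥ min(βS, βC) (‖x‖² + ‖w + y‖²)`.
Since `βC‖w‖ ≤ ‖Cw‖ = ‖Bx‖ ≤ βB‖x‖`, the change of variables `(x, y) ↦ (x, w + y)` shrinks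
norms by at most the factor `βC / (βC + βB)`, which is where the constant comes from.
-/

open WithLp

/-- Minkowski in the plane, `‖(a, c + b)‖ ≤ ‖(a, c)‖ + b`, combined with `b ≤ (γ / β) a`. -/
theorem div_add_sq_mul_sq_add_add_sq_le {β γ a b c : ℝ} (hβ : 0 < β) (hγ : 0 ≤ γ)
    (hb : 0 ≤ b) (hc : 0 ≤ c) (hba : β * b ≤ γ * a) :
    (β / (β + γ)) ^ 2 * (a ^ 2 + (c + b) ^ 2) ≤ a ^ 2 + c ^ 2 := by
  have hb2 : (β * b) ^ 2 ≤ (γ * a) ^ 2 := pow_le_pow_left₀ (by positivity) hba 2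
  have hcb : β * c * (β * b) ≤ β * c * (γ * a) := mul_le_mul_of_nonneg_left hba (by positivity)
  have hβγ : 0 ≤ β * γ := by positivity
  rw [div_pow, div_mul_eq_mul_div, div_le_iff₀ (by positivity)]
  linarith [mul_nonneg hβγ (sq_nonneg (a - c)),
    mul_nonneg hβγ (add_nonneg (sq_nonneg a) (sq_nonneg c)), mul_nonneg (sq_nonneg γ) (sq_nonneg c)]

namespace Matrix

variable {m n : Type*}

theorem PosSemidef.posDef_of_sub_smul_one [DecidableEq n] {M : Matrix n n ℝ} {c : ℝ}
    (hM : (M - c • 1).PosSemidef) (hc : 0 < c) : M.PosDef := by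
  simpa using PosDef.posSemidef_add hM (PosDef.one.smul hc)

variable [Fintype m] [Fintype n]

theorem dotProduct_self_eq_norm_sq (x : n → ℝ) : x ⬝ᵥ x = ‖toLp 2 x‖ ^ 2 := by
  rw [← real_inner_self_eq_norm_sq, EuclideanSpace.inner_toLp_toLp, star_trivial]

theorem dotProduct_le_norm_mul_norm (x y : n → ℝ) : x ⬝ᵥ y ≤ ‖toLp 2 x‖ * ‖toLp 2 y‖ := by
  simpa [EuclideanSpace.inner_toLp_toLp, dotProduct_comm y] using
    real_inner_le_norm (toLp 2 x) (toLp 2 y)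

theorem norm_toLp_sumElim_sq (x : m → ℝ) (y : n → ℝ) :
    ‖toLp 2 (x ⊕ᵥ y)‖ ^ 2 = ‖toLp 2 x‖ ^ 2 + ‖toLp 2 y‖ ^ 2 := by
  simp only [← dotProduct_self_eq_norm_sq, sumElim_dotProduct_sumElim]

theorem norm_toLp_mulVec_le_opNorm [DecidableEq n] (B : Matrix m n ℝ) (x : n → ℝ) :
    ‖toLp 2 (B *ᵥ x)‖ ≤ opNorm B * ‖toLp 2 x‖ :=
  (LinearMap.toContinuousLinearMap (toEuclideanLin B)).le_opNorm (toLp 2 x)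

variable [DecidableEq n]

theorem posSemidef_sub_smul_one_iff {M : Matrix n n ℝ} {c : ℝ} :
    (M - c • 1).PosSemidef ↔ M.IsHermitian ∧ ∀ x, c * ‖toLp 2 x‖ ^ 2 ≤ x ⬝ᵥ M *ᵥ x := by
  have hI : (c • 1 : Matrix n n ℝ).IsHermitian := by simp [isHermitian_iff_isSymm]
  simp only [posSemidef_iff_dotProduct_mulVec, star_trivial, sub_mulVec, smul_mulVec,
    one_mulVec, dotProduct_sub, dotProduct_smul, smul_eq_mul, sub_nonneg,
    ← dotProduct_self_eq_norm_sq]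
  exact and_congr_left' ⟨fun h => by simpa using h.add hI, fun h => h.sub hI⟩

theorem PosSemidef.mul_norm_le_norm_mulVec {M : Matrix n n ℝ} {c : ℝ}
    (hM : (M - c • 1).PosSemidef) (x : n → ℝ) : c * ‖toLp 2 x‖ ≤ ‖toLp 2 (M *ᵥ x)‖ := by
  rcases (norm_nonneg (toLp 2 x)).eq_or_lt with hx | hx
  · simp [← hx]
  refine le_of_mul_le_mul_right ?_ hx
  calc c * ‖toLp 2 x‖ * ‖toLp 2 x‖ = c * ‖toLp 2 x‖ ^ 2 := by ring
    _ ≤ x ⬝ᵥ M *ᵥ x := (posSemidef_sub_smul_one_iff.1 hM).2 x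
    _ ≤ ‖toLp 2 x‖ * ‖toLp 2 (M *ᵥ x)‖ := dotProduct_le_norm_mul_norm _ _
    _ = _ := mul_comm _ _

theorem PosSemidef.mul_norm_inv_mulVec_le {M : Matrix n n ℝ} {c : ℝ}
    (hM : (M - c • 1).PosSemidef) (hc : 0 < c) (u : n → ℝ) :
    c * ‖toLp 2 (M⁻¹ *ᵥ u)‖ ≤ ‖toLp 2 u‖ := by
  have hdet := (isUnit_iff_isUnit_det M).1 (hM.posDef_of_sub_smul_one hc).isUnit
  simpa [mulVec_mulVec, mul_nonsing_inv M hdet] using hM.mul_norm_le_norm_mulVec (M⁻¹ *ᵥ u)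

variable [DecidableEq m]

theorem le_dotProduct_fromBlocks_mulVec {A : Matrix m m ℝ} {B : Matrix n m ℝ}
    {C : Matrix n n ℝ} {βC βS : ℝ} (hC : C.IsHermitian) (hβC : 0 < βC)
    (hCge : (C - βC • 1).PosSemidef) (hSchur : (A - Bᵀ * C⁻¹ * B - βS • 1).PosSemidef)
    (x : m → ℝ) (y : n → ℝ) :
    βC * ‖toLp 2 (C⁻¹ *ᵥ B *ᵥ x + y)‖ ^ 2 + βS * ‖toLp 2 x‖ ^ 2 ≤
      (x ⊕ᵥ y) ⬝ᵥ fromBlocks A Bᵀ B C *ᵥ (x ⊕ᵥ y) := by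
  have := (hCge.posDef_of_sub_smul_one hβC).isUnit.invertible
  have hBt : Bᵀᴴ = B := by simp [conjTranspose_eq_transpose_of_trivial]
  have key := schur_complement_eq₂₂ A Bᵀ x y hC
  simp only [hBt, star_trivial, ← dotProduct_mulVec, ← mulVec_mulVec] at key
  rw [key]
  exact add_le_add ((posSemidef_sub_smul_one_iff.1 hCge).2 _)
    ((posSemidef_sub_smul_one_iff.1 hSchur).2 x)

end Matrix

/-- **Quantitative Schur-complement lower bound (Lemma 5.5(ii)).**
If `C ⪰ β_C I`, the Schur complement satisfies `A − BᵀC⁻¹B ⪰ β_S I`, and `‖B‖ ≤ β_B`,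
then `H = [[A, Bᵀ],[B, C]] ⪰ λI` with `λ = (β_C/(β_C+β_B))² · min(β_S, β_C) > 0`. -/
theorem schur_quantitative_lower_bound
    (m n : ℕ)
    (A : Matrix (Fin m) (Fin m) ℝ) (C : Matrix (Fin n) (Fin n) ℝ)
    (B : Matrix (Fin n) (Fin m) ℝ)
    (hA : A.IsSymm) (hC : C.IsSymm)
    (βC βS βB : ℝ) (hβC : 0 < βC) (hβS : 0 < βS)
    (hCge : (C - βC • (1 : Matrix (Fin n) (Fin n) ℝ)).PosSemidef)
    (hSchur : (A - Bᵀ * C⁻¹ * B - βS • (1 : Matrix (Fin m) (Fin m) ℝ)).PosSemidef)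
    (hB : opNorm B ≤ βB) :
    0 < (βC / (βC + βB)) ^ 2 * min βS βC ∧
    (Matrix.fromBlocks A Bᵀ B C
      - ((βC / (βC + βB)) ^ 2 * min βS βC) •
          (1 : Matrix (Fin m ⊕ Fin n) (Fin m ⊕ Fin n) ℝ)).PosSemidef := by
  have hβB : 0 ≤ βB := (norm_nonneg _).trans hB
  have hCh : C.IsHermitian := isHermitian_iff_isSymm.2 hC
  have hH : (fromBlocks A Bᵀ B C).IsHermitian :=
    (isHermitian_iff_isSymm.2 hA).fromBlocks (by simp [conjTranspose_eq_transpose_of_trivial]) hCh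
  refine ⟨by have := lt_min hβS hβC; positivity, posSemidef_sub_smul_one_iff.2 ⟨hH, fun v => ?_⟩⟩
  obtain ⟨x, y, rfl⟩ : ∃ x y, v = x ⊕ᵥ y := ⟨_, _, (Sum.elim_comp_inl_inr v).symm⟩
  set w := C⁻¹ *ᵥ B *ᵥ x
  have hw : βC * ‖toLp 2 w‖ ≤ βB * ‖toLp 2 x‖ :=
    (hCge.mul_norm_inv_mulVec_le hβC _).trans <|
      (norm_toLp_mulVec_le_opNorm B x).trans (by gcongr)
  have hy : ‖toLp 2 y‖ ≤ ‖toLp 2 (w + y)‖ + ‖toLp 2 w‖ := by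
    simpa only [toLp_add] using norm_le_add_norm_add' (toLp 2 w) (toLp 2 y)
  rw [norm_toLp_sumElim_sq, mul_comm _ (min βS βC), mul_assoc]
  calc min βS βC * ((βC / (βC + βB)) ^ 2 * (‖toLp 2 x‖ ^ 2 + ‖toLp 2 y‖ ^ 2))
      ≤ min βS βC * ((βC / (βC + βB)) ^ 2 *
          (‖toLp 2 x‖ ^ 2 + (‖toLp 2 (w + y)‖ + ‖toLp 2 w‖) ^ 2)) := by gcongr
    _ ≤ min βS βC * (‖toLp 2 x‖ ^ 2 + ‖toLp 2 (w + y)‖ ^ 2) := by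
        gcongr
        exact div_add_sq_mul_sq_add_add_sq_le hβC hβB (norm_nonneg _) (norm_nonneg _) hw
    _ ≤ βC * ‖toLp 2 (w + y)‖ ^ 2 + βS * ‖toLp 2 x‖ ^ 2 := by
        nlinarith [min_le_left βS βC, min_le_right βS βC]
    _ ≤ _ := le_dotProduct_fromBlocks_mulVec hCh hβC hCge hSchur x y
end

section
/- Exponential decay of products of closed-loop transition matrices (Lemma 6.3, abstract form): Let N ≥ 1, n ≥ 1, λ > 0 and Ῡ > 0. Let K_0,…,K_N be symmetric n×n real matrices with K_N ⪰ λI and ‖K_k‖ ≤ Ῡ for all k = 0,…,N, and let E_k, G_k (k = 0,…,N−1) be n×n real matrices such that K_k = E_kᵀK_{k+1}E_k + G_k and G_k ⪰ λI for all k. Then for all 0 ≤ i ≤ j ≤ N−1: ‖E_jE_{j−1}⋯E_i‖ ≤ sqrt(Ῡ/λ) · ρ^{j−i+1}, where ρ = 1/sqrt(1 + λ/Ῡ) ∈ (0,1). -/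
/-!
The quadratic forms `V_k(x) = xᵀ K_k x` act as Lyapunov functions for the transitions `x ↦ E_k x`.
The recursion gives `V_k(x) = V_{k+1}(E_k x) + xᵀ G_k x`. By backward induction from `K_N ⪰ λI`
every `K_k ⪰ λI`, and since `V_k(x) ≤ Ῡ‖x‖²`, the term `xᵀ G_k x ≥ λ‖x‖² ≥ (λ/Ῡ) V_{k+1}(E_k x)`,
so each step contracts `V` by the factor `1 + λ/Ῡ`. Over `m` steps,
`λ‖E_j⋯E_i x‖² ≤ V_{j+1}(E_j⋯E_i x) ≤ (1 + λ/Ῡ)^{-m} V_i(x) ≤ (1 + λ/Ῡ)^{-m} Ῡ‖x‖²`.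
-/

open Matrix BigOperators

/-- The Euclidean norm of a vector in `ℝ^n`. -/
noncomputable def evNorm {n : ℕ} (x : Fin n → ℝ) : ℝ :=
  ‖(EuclideanSpace.equiv (Fin n) ℝ).symm x‖

/-- Ordered product of matrices: `prodE E i len = E (i+len-1) * ⋯ * E (i+1) * E i`. -/
def prodE {n : ℕ} (E : ℕ → Matrix (Fin n) (Fin n) ℝ) : ℕ → ℕ → Matrix (Fin n) (Fin n) ℝ
  | _, 0 => 1
  | i, (len + 1) => E (i + len) * prodE E i len

theorem evNorm_mulVec_le {n : ℕ} (A : Matrix (Fin n) (Fin n) ℝ) (x : Fin n → ℝ) :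
    evNorm (A *ᵥ x) ≤ opNorm A * evNorm x :=
  (LinearMap.toContinuousLinearMap (Matrix.toEuclideanLin A)).le_opNorm
    ((EuclideanSpace.equiv (Fin n) ℝ).symm x)

theorem opNorm_le_of_forall_sq_le {n : ℕ} (A : Matrix (Fin n) (Fin n) ℝ) {C : ℝ} (hC : 0 ≤ C)
    (h : ∀ x : Fin n → ℝ, evNorm (A *ᵥ x) ^ 2 ≤ C ^ 2 * evNorm x ^ 2) : opNorm A ≤ C := by
  refine ContinuousLinearMap.opNorm_le_bound _ hC fun v => ?_
  have hv := h (EuclideanSpace.equiv (Fin n) ℝ v)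
  rw [← mul_pow] at hv
  have hle := (pow_le_pow_iff_left₀ (norm_nonneg _) (mul_nonneg hC (norm_nonneg _))
    two_ne_zero).mp hv
  simp at hle
  exact hle

theorem dotProduct_mulVec_le_opNorm_mul_sq {n : ℕ} (A : Matrix (Fin n) (Fin n) ℝ)
    (x : Fin n → ℝ) : x ⬝ᵥ A *ᵥ x ≤ opNorm A * evNorm x ^ 2 := by
  have hinner : x ⬝ᵥ A *ᵥ x = inner ℝ ((EuclideanSpace.equiv (Fin n) ℝ).symm x)
      ((EuclideanSpace.equiv (Fin n) ℝ).symm (A *ᵥ x)) := by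
    simp [dotProduct, PiLp.inner_apply, mul_comm]
  calc x ⬝ᵥ A *ᵥ x ≤ evNorm x * evNorm (A *ᵥ x) := hinner ▸ real_inner_le_norm _ _
    _ ≤ evNorm x * (opNorm A * evNorm x) :=
        mul_le_mul_of_nonneg_left (evNorm_mulVec_le A x) (norm_nonneg _)
    _ = opNorm A * evNorm x ^ 2 := by ring

theorem dotProduct_transpose_mul_mul_add_mulVec {m p R : Type*} [Fintype m] [Fintype p]
    [CommSemiring R] (E : Matrix p m R) (K : Matrix p p R) (G : Matrix m m R) (x : m → R) :
    x ⬝ᵥ (Eᵀ * K * E + G) *ᵥ x = (E *ᵥ x) ⬝ᵥ K *ᵥ (E *ᵥ x) + x ⬝ᵥ G *ᵥ x := by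
  rw [add_mulVec, dotProduct_add, ← mulVec_mulVec, ← mulVec_mulVec, dotProduct_mulVec x,
    vecMul_transpose, dotProduct_mulVec (E *ᵥ x)]

theorem pow_mul_prodE_le {n : ℕ} {E : ℕ → Matrix (Fin n) (Fin n) ℝ}
    {V : ℕ → (Fin n → ℝ) → ℝ} {c : ℝ} (hc : 0 ≤ c) {i len : ℕ}
    (hstep : ∀ k, i ≤ k → k < i + len → ∀ x, c * V (k + 1) (E k *ᵥ x) ≤ V k x)
    (x : Fin n → ℝ) : c ^ len * V (i + len) (prodE E i len *ᵥ x) ≤ V i x := by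
  induction len with
  | zero => simp [prodE]
  | succ len ih =>
    have hprod : prodE E i (len + 1) *ᵥ x = E (i + len) *ᵥ (prodE E i len *ᵥ x) :=
      (mulVec_mulVec _ _ _).symm
    calc c ^ (len + 1) * V (i + (len + 1)) (prodE E i (len + 1) *ᵥ x)
        = c ^ len * (c * V (i + len + 1) (E (i + len) *ᵥ (prodE E i len *ᵥ x))) := by
          rw [hprod, ← add_assoc]; ring
      _ ≤ c ^ len * V (i + len) (prodE E i len *ᵥ x) :=
          mul_le_mul_of_nonneg_left (hstep _ le_self_add (by omega) _) (by positivity)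
      _ ≤ V i x := ih fun k hik hk => hstep k hik (by omega)

section Lyapunov

variable {n : ℕ} {lam Ybar : ℝ}

theorem lam_mul_sq_le_dotProduct_mulVec {N : ℕ} {K E G : ℕ → Matrix (Fin n) (Fin n) ℝ}
    (hlam : 0 ≤ lam) (hKN : ∀ x : Fin n → ℝ, lam * evNorm x ^ 2 ≤ x ⬝ᵥ K N *ᵥ x)
    (hrec : ∀ k < N, K k = (E k)ᵀ * K (k + 1) * E k + G k)
    (hG : ∀ k < N, ∀ x : Fin n → ℝ, lam * evNorm x ^ 2 ≤ x ⬝ᵥ G k *ᵥ x) :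
    ∀ k ≤ N, ∀ x : Fin n → ℝ, lam * evNorm x ^ 2 ≤ x ⬝ᵥ K k *ᵥ x := by
  intro k hk
  induction hk using Nat.decreasingInduction with
  | self => exact hKN
  | of_succ k hkN ih =>
    intro x
    have hnext : 0 ≤ (E k *ᵥ x) ⬝ᵥ K (k + 1) *ᵥ (E k *ᵥ x) :=
      le_trans (by positivity) (ih (E k *ᵥ x))
    rw [hrec k hkN, dotProduct_transpose_mul_mul_add_mulVec]
    linarith [hG k hkN x]

theorem one_add_div_mul_dotProduct_le {E K K' G : Matrix (Fin n) (Fin n) ℝ} {x : Fin n → ℝ}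
    (hlam : 0 ≤ lam) (hYbar : 0 < Ybar) (hK : K = Eᵀ * K' * E + G)
    (hG : lam * evNorm x ^ 2 ≤ x ⬝ᵥ G *ᵥ x) (hKx : x ⬝ᵥ K *ᵥ x ≤ Ybar * evNorm x ^ 2) :
    (1 + lam / Ybar) * ((E *ᵥ x) ⬝ᵥ K' *ᵥ (E *ᵥ x)) ≤ x ⬝ᵥ K *ᵥ x := by
  rw [hK, dotProduct_transpose_mul_mul_add_mulVec] at hKx ⊢
  have hnext : (E *ᵥ x) ⬝ᵥ K' *ᵥ (E *ᵥ x) ≤ Ybar * evNorm x ^ 2 := by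
    nlinarith [sq_nonneg (evNorm x)]
  have hscaled : lam / Ybar * ((E *ᵥ x) ⬝ᵥ K' *ᵥ (E *ᵥ x)) ≤ lam * evNorm x ^ 2 :=
    calc lam / Ybar * ((E *ᵥ x) ⬝ᵥ K' *ᵥ (E *ᵥ x)) ≤ lam / Ybar * (Ybar * evNorm x ^ 2) :=
          mul_le_mul_of_nonneg_left hnext (by positivity)
      _ = lam * evNorm x ^ 2 := by field_simp
  linarith

end Lyapunov

theorem sq_sqrt_div_mul_inv_sqrt_pow {a b c : ℝ} (hab : 0 ≤ a / b) (hc : 0 ≤ c) (m : ℕ) :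
    (Real.sqrt (a / b) * (1 / Real.sqrt c) ^ m) ^ 2 = a / (b * c ^ m) := by
  rw [mul_pow, ← pow_mul, mul_comm m 2, pow_mul, div_pow, one_pow, Real.sq_sqrt hc,
    Real.sq_sqrt hab, _root_.one_div_pow, div_mul_eq_div_div, div_eq_mul_one_div (a / b)]

theorem exp_decay_transition_products_general
    (N n : ℕ)
    (lam Ybar : ℝ) (hlam : 0 < lam) (hYbar : 0 < Ybar)
    (K E G : ℕ → Matrix (Fin n) (Fin n) ℝ)
    (hKN : ∀ x : Fin n → ℝ, lam * evNorm x ^ 2 ≤ x ⬝ᵥ K N *ᵥ x)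
    (hKbnd : ∀ k ≤ N, opNorm (K k) ≤ Ybar)
    (hrec : ∀ k < N, K k = (E k)ᵀ * K (k + 1) * E k + G k)
    (hG : ∀ k < N, ∀ x : Fin n → ℝ, lam * evNorm x ^ 2 ≤ x ⬝ᵥ G k *ᵥ x) :
    ∀ i j, i ≤ j → j < N →
      opNorm (prodE E i (j - i + 1))
        ≤ Real.sqrt (Ybar / lam) * (1 / Real.sqrt (1 + lam / Ybar)) ^ (j - i + 1) := by
  intro i j hij hjN
  set c := 1 + lam / Ybar
  set len := j - i + 1
  have hc : 0 < c := by positivity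
  have hupper : ∀ k ≤ N, ∀ x : Fin n → ℝ, x ⬝ᵥ K k *ᵥ x ≤ Ybar * evNorm x ^ 2 := fun k hk x =>
    (dotProduct_mulVec_le_opNorm_mul_sq _ x).trans
      (mul_le_mul_of_nonneg_right (hKbnd k hk) (sq_nonneg _))
  have hlower := lam_mul_sq_le_dotProduct_mulVec hlam.le hKN hrec hG
  have hdecay := pow_mul_prodE_le (V := fun k x => x ⬝ᵥ K k *ᵥ x) hc.le (i := i) (len := len)
    fun k _ hk x => one_add_div_mul_dotProduct_le hlam.le hYbar (hrec k (by omega))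
      (hG k (by omega) x) (hupper k (by omega) x)
  refine opNorm_le_of_forall_sq_le _ (by positivity) fun x => ?_
  have hchain : lam * c ^ len * evNorm (prodE E i len *ᵥ x) ^ 2 ≤ Ybar * evNorm x ^ 2 := by
    have h := hlower (i + len) (by omega) (prodE E i len *ᵥ x)
    nlinarith [hdecay x, hupper i (by omega) x, pow_pos hc len]
  rw [sq_sqrt_div_mul_inv_sqrt_pow (by positivity) hc.le, div_mul_eq_mul_div,
    le_div_iff₀ (by positivity)]
  linarith

/-- **Exponential decay of products of closed-loop transition matrices
(Lemma 6.3, abstract form).**  If `K_N ⪰ λI`, `‖K_k‖ ≤ Ῡ`, and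
`K_k = E_kᵀK_{k+1}E_k + G_k` with `G_k ⪰ λI` (as quadratic forms), then
`‖E_jE_{j−1}⋯E_i‖ ≤ √(Ῡ/λ)·ρ^{j−i+1}` with `ρ = 1/√(1+λ/Ῡ)`. -/
theorem exp_decay_transition_products
    (N n : ℕ) (hN : 1 ≤ N) (hn : 1 ≤ n)
    (lam Ybar : ℝ) (hlam : 0 < lam) (hYbar : 0 < Ybar)
    (K E G : ℕ → Matrix (Fin n) (Fin n) ℝ)
    (hKsymm : ∀ k ≤ N, (K k).IsSymm)
    (hKN : ∀ x : Fin n → ℝ, lam * evNorm x ^ 2 ≤ x ⬝ᵥ K N *ᵥ x)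
    (hKbnd : ∀ k ≤ N, opNorm (K k) ≤ Ybar)
    (hrec : ∀ k < N, K k = (E k)ᵀ * K (k + 1) * E k + G k)
    (hG : ∀ k < N, ∀ x : Fin n → ℝ, lam * evNorm x ^ 2 ≤ x ⬝ᵥ G k *ᵥ x) :
    ∀ i j, i ≤ j → j < N →
      opNorm (prodE E i (j - i + 1))
        ≤ Real.sqrt (Ybar / lam) * (1 / Real.sqrt (1 + lam / Ybar)) ^ (j - i + 1) :=
  exp_decay_transition_products_general N n lam Ybar hlam hYbar K E G hKN hKbnd hrec hG
end

section
/- Exponential decay of the sensitivity kernels (Lemma 6.4): Let γ, Υ, Ῡ > 0, Υ_E ≥ 1 and ρ ∈ (0,1). Assume the data bounds ‖A_k‖, ‖B_k‖, ‖R_k‖, ‖S_k‖, ‖D_{k1}‖, ‖D_{k2}‖ ≤ Υ for all k; assume the Riccati quantities satisfy W_k ⪰ γI for all k ∈ {0,…,N−1}, ‖K_k‖ ≤ Ῡ for all k ∈ {0,…,N}, and ‖E_jE_{j−1}⋯E_i‖ ≤ Υ_E ρ^{j−i+1} for all 0 ≤ i ≤ j ≤ N−1. Define O_k = B_kW_k⁻¹B_kᵀ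 and, for i ∈ {0,…,N−1}, k ∈ {0,…,N}, U_i^k = Σ_{s=0}^{min(i,k)−1}(E_{k−1}⋯E_{s+1})O_s(M_i^{s+1})ᵀ − [i+1 ≤ k]·(E_{k−1}⋯E_{i+1})B_iW_i⁻¹D_{i2}ᵀ and F_i^k = Σ_{s=0}^{min(i,k)−1}(E_{k−1}⋯E_{s+1})O_s(V_i^{s+1})ᵀ + [i+1 ≤ k]·(E_{k−1}⋯E_{i+1})(I − O_iK_{i+1}), with [·] the indicator and empty products of the E's the identity. Then there exists a constant Υ_{uf} > 0, depending only on (γ, Υ, Ῡ, Υ_E, ρ) and not on N, i, or k, such that ‖U_i^k‖ ≤ Υ_{uf} ρ^{|i−k|} and ‖F_i^k‖ ≤ Υ_{uf} ρ^{|i−k|} for all i ∈ {0,…,N−1} and k ∈ {0,…,N}. -/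
/-!
Both kernels are sums over `s < min i k` of a closed-loop product `E_{k-1} ⋯ E_{s+1}`, which
decays like `ρ^(k-1-s)`, times a factor `O_s (M_i^{s+1})ᵀ` or `O_s (V_i^{s+1})ᵀ` decaying like
`ρ^(i-1-s)`, plus, when `i < k`, one product `E_{k-1} ⋯ E_{i+1}` times a bounded matrix. Since
`(k-1-s) + (i-1-s) = |i-k| + 2 (min i k - 1 - s)`, the sum is at most `ρ^|i-k|` times a geometric
series in `ρ²`. The bounds on `O_s`, `P_s` and the indicator factors come from the data bounds and
`‖W_s⁻¹‖ ≤ γ⁻¹`, which follows from `W_s ⪰ γ I` by coercivity.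
-/

open Matrix BigOperators Finset

/-- `V_i^k = -K_{i+1} (E_i E_{i-1} ⋯ E_k)`. -/
noncomputable def Vmat {nx : ℕ} (K E : ℕ → Matrix (Fin nx) (Fin nx) ℝ) (i k : ℕ) :
    Matrix (Fin nx) (Fin nx) ℝ :=
  -(K (i + 1) * prodE E k (i + 1 - k))

/-- `M_i^k = -(D_{i1} + D_{i2} P_i) (E_{i-1} E_{i-2} ⋯ E_k)`. -/
noncomputable def Mmat {nx nu nd : ℕ} (D1 : ℕ → Matrix (Fin nd) (Fin nx) ℝ)
    (D2 : ℕ → Matrix (Fin nd) (Fin nu) ℝ) (P : ℕ → Matrix (Fin nu) (Fin nx) ℝ)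
    (E : ℕ → Matrix (Fin nx) (Fin nx) ℝ) (i k : ℕ) : Matrix (Fin nd) (Fin nx) ℝ :=
  -((D1 i + D2 i * P i) * prodE E k (i - k))

/-- `O_k = B_k W_k⁻¹ B_kᵀ`. -/
noncomputable def Okm {nx nu : ℕ} (B : ℕ → Matrix (Fin nx) (Fin nu) ℝ)
    (W : ℕ → Matrix (Fin nu) (Fin nu) ℝ) (k : ℕ) : Matrix (Fin nx) (Fin nx) ℝ :=
  B k * (W k)⁻¹ * (B k)ᵀ

/-- The sensitivity kernel `U_i^k`. -/
noncomputable def Umat {nx nu nd : ℕ} (B : ℕ → Matrix (Fin nx) (Fin nu) ℝ)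
    (W : ℕ → Matrix (Fin nu) (Fin nu) ℝ) (P : ℕ → Matrix (Fin nu) (Fin nx) ℝ)
    (E : ℕ → Matrix (Fin nx) (Fin nx) ℝ)
    (D1 : ℕ → Matrix (Fin nd) (Fin nx) ℝ) (D2 : ℕ → Matrix (Fin nd) (Fin nu) ℝ)
    (i k : ℕ) : Matrix (Fin nx) (Fin nd) ℝ :=
  (∑ s ∈ range (min i k),
      prodE E (s + 1) (k - 1 - s) * Okm B W s * (Mmat D1 D2 P E i (s + 1))ᵀ)
    - (if i + 1 ≤ k then prodE E (i + 1) (k - 1 - i) * B i * (W i)⁻¹ * (D2 i)ᵀ else 0)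

/-- The sensitivity kernel `F_i^k`. -/
noncomputable def Fmat {nx nu : ℕ} (B : ℕ → Matrix (Fin nx) (Fin nu) ℝ)
    (W : ℕ → Matrix (Fin nu) (Fin nu) ℝ)
    (K E : ℕ → Matrix (Fin nx) (Fin nx) ℝ) (i k : ℕ) : Matrix (Fin nx) (Fin nx) ℝ :=
  (∑ s ∈ range (min i k),
      prodE E (s + 1) (k - 1 - s) * Okm B W s * (Vmat K E i (s + 1))ᵀ)
    + (if i + 1 ≤ k then prodE E (i + 1) (k - 1 - i) * (1 - Okm B W i * K (i + 1)) else 0)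


open scoped Matrix.Norms.L2Operator

section L2OpNorm

variable {l m n : Type*} [Fintype l] [Fintype m] [Fintype n] [DecidableEq n]

theorem opNorm_eq_norm (A : Matrix m n ℝ) : opNorm A = ‖A‖ := rfl

theorem Matrix.l2_opNorm_mul_le_of_le [DecidableEq m] {𝕜 : Type*} [RCLike 𝕜] {A : Matrix l m 𝕜}
    {B : Matrix m n 𝕜} {a b : ℝ} (hA : ‖A‖ ≤ a) (hB : ‖B‖ ≤ b) : ‖A * B‖ ≤ a * b :=
  (l2_opNorm_mul A B).trans (mul_le_mul hA hB (norm_nonneg B) ((norm_nonneg A).trans hA))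

theorem Matrix.l2_opNorm_transpose [DecidableEq m] (A : Matrix m n ℝ) : ‖Aᵀ‖ = ‖A‖ := by
  rw [← conjTranspose_eq_transpose_of_trivial, l2_opNorm_conjTranspose]

theorem Matrix.l2_opNorm_one_le : ‖(1 : Matrix n n ℝ)‖ ≤ 1 := by
  rw [cstar_norm_def, map_one]
  exact ContinuousLinearMap.norm_id_le

theorem Matrix.mul_norm_le_norm_toEuclideanCLM_of_posSemidef {W : Matrix n n ℝ} {γ : ℝ}
    (h : (W - γ • 1).PosSemidef) (x : EuclideanSpace ℝ n) :
    γ * ‖x‖ ≤ ‖toEuclideanCLM (𝕜 := ℝ) W x‖ := by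
  have hpos : 0 ≤ inner ℝ (toEuclideanCLM (𝕜 := ℝ) (W - γ • 1) x) x :=
    (isPositive_toEuclideanLin_iff.mpr h).inner_nonneg_left x
  rw [map_sub, map_smul, map_one, _root_.sub_apply, _root_.smul_apply, one_apply_eq_self,
    inner_sub_left, real_inner_smul_left, real_inner_self_eq_norm_sq] at hpos
  have hcs := real_inner_le_norm (toEuclideanCLM (𝕜 := ℝ) W x) x
  rcases (norm_nonneg x).eq_or_lt with hx | hx
  · rw [← hx, mul_zero]
    exact norm_nonneg _
  · exact le_of_mul_le_mul_right (by nlinarith) hx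

-- If `W` is singular, `W⁻¹ = 0` and the bound is trivial.
theorem Matrix.l2_opNorm_inv_le {W : Matrix n n ℝ} {γ : ℝ} (hγ : 0 < γ)
    (h : ∀ x, γ * ‖x‖ ≤ ‖toEuclideanCLM (𝕜 := ℝ) W x‖) : ‖W⁻¹‖ ≤ γ⁻¹ := by
  by_cases hW : IsUnit W.det
  · rw [cstar_norm_def]
    refine ContinuousLinearMap.opNorm_le_bound _ (inv_nonneg.mpr hγ.le) fun y => ?_
    have hy : toEuclideanCLM (𝕜 := ℝ) W (toEuclideanCLM (𝕜 := ℝ) W⁻¹ y) = y := by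
      rw [← mul_apply_eq_comp, ← map_mul, mul_nonsing_inv W hW, map_one, one_apply_eq_self]
    rw [inv_mul_eq_div, le_div_iff₀' hγ]
    simpa only [hy] using h (toEuclideanCLM (𝕜 := ℝ) W⁻¹ y)
  · rw [nonsing_inv_apply_not_isUnit W hW, norm_zero]
    exact inv_nonneg.mpr hγ.le

theorem Matrix.l2_opNorm_inv_le_of_posSemidef {W : Matrix n n ℝ} {γ : ℝ} (hγ : 0 < γ)
    (h : (W - γ • 1).PosSemidef) : ‖W⁻¹‖ ≤ γ⁻¹ :=
  l2_opNorm_inv_le hγ (mul_norm_le_norm_toEuclideanCLM_of_posSemidef h)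

end L2OpNorm

theorem sum_range_min_pow_mul_pow_le {ρ : ℝ} (hρ0 : 0 ≤ ρ) (hρ1 : ρ < 1) (i k : ℕ) :
    ∑ s ∈ range (min i k), ρ ^ (k - 1 - s) * ρ ^ (i - 1 - s)
      ≤ (1 - ρ ^ 2)⁻¹ * ρ ^ Nat.dist i k := by
  have hq1 : ρ ^ 2 < 1 := by nlinarith
  calc ∑ s ∈ range (min i k), ρ ^ (k - 1 - s) * ρ ^ (i - 1 - s)
      = ∑ s ∈ range (min i k), (ρ ^ 2) ^ (min i k - 1 - s) * ρ ^ Nat.dist i k := by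
        refine sum_congr rfl fun s hs => ?_
        have hexp : k - 1 - s + (i - 1 - s) = 2 * (min i k - 1 - s) + Nat.dist i k := by
          rw [mem_range] at hs
          unfold Nat.dist
          omega
        rw [← pow_add, hexp, pow_add, pow_mul]
    _ = (∑ t ∈ range (min i k), (ρ ^ 2) ^ t) * ρ ^ Nat.dist i k := by
        rw [sum_range_reflect (fun t => (ρ ^ 2) ^ t * ρ ^ Nat.dist i k), sum_mul]
    _ ≤ (1 - ρ ^ 2)⁻¹ * ρ ^ Nat.dist i k := by
        refine mul_le_mul_of_nonneg_right ?_ (pow_nonneg hρ0 _)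
        have hgeom := geom_sum_Ico_le_of_lt_one (m := 0) (n := min i k) (sq_nonneg ρ) hq1
        rwa [← range_eq_Ico, pow_zero, one_div] at hgeom

section DecayingSums

variable {l m n : Type*} [Fintype l] [Fintype m] [Fintype n] [DecidableEq n]

theorem norm_sum_range_min_mul_le_pow_dist [DecidableEq m] (X : ℕ → Matrix l m ℝ)
    (Y : ℕ → Matrix m n ℝ) {i k : ℕ} {a b ρ : ℝ} (ha : 0 ≤ a) (hb : 0 ≤ b) (hρ0 : 0 ≤ ρ)
    (hρ1 : ρ < 1) (hX : ∀ s < min i k, ‖X s‖ ≤ a * ρ ^ (k - 1 - s))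
    (hY : ∀ s < min i k, ‖Y s‖ ≤ b * ρ ^ (i - 1 - s)) :
    ‖∑ s ∈ range (min i k), X s * Y s‖ ≤ a * b * ((1 - ρ ^ 2)⁻¹ * ρ ^ Nat.dist i k) :=
  calc ‖∑ s ∈ range (min i k), X s * Y s‖
      ≤ ∑ s ∈ range (min i k), a * ρ ^ (k - 1 - s) * (b * ρ ^ (i - 1 - s)) :=
        (norm_sum_le _ _).trans <| sum_le_sum fun s hs =>
          Matrix.l2_opNorm_mul_le_of_le (hX s (mem_range.mp hs)) (hY s (mem_range.mp hs))
    _ = a * b * ∑ s ∈ range (min i k), ρ ^ (k - 1 - s) * ρ ^ (i - 1 - s) := by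
        rw [mul_sum]
        exact sum_congr rfl fun _ _ => by ring
    _ ≤ a * b * ((1 - ρ ^ 2)⁻¹ * ρ ^ Nat.dist i k) :=
        mul_le_mul_of_nonneg_left (sum_range_min_pow_mul_pow_le hρ0 hρ1 i k) (mul_nonneg ha hb)

theorem norm_ite_le_pow_dist {Z : Matrix m n ℝ} {i k : ℕ} {c ρ : ℝ} (hc : 0 ≤ c) (hρ : 0 < ρ)
    (hZ : i + 1 ≤ k → ‖Z‖ ≤ c * ρ ^ (k - 1 - i)) :
    ‖if i + 1 ≤ k then Z else 0‖ ≤ c * (ρ⁻¹ * ρ ^ Nat.dist i k) := by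
  split_ifs with hik
  · have hpow : ρ ^ Nat.dist i k = ρ * ρ ^ (k - 1 - i) := by
      rw [Nat.dist_eq_sub_of_le (by omega), ← pow_succ']
      congr 1
      omega
    rw [hpow, inv_mul_cancel_left₀ hρ.ne']
    exact hZ hik
  · rw [norm_zero]
    positivity

end DecayingSums

section ClosedLoop

variable {n : ℕ} {m : Type*} [Fintype m] [DecidableEq m] (E : ℕ → Matrix (Fin n) (Fin n) ℝ)

theorem norm_prodE_le {N : ℕ} {c ρ : ℝ} (hc : 1 ≤ c)
    (h : ∀ i j, i ≤ j → j < N → ‖prodE E i (j - i + 1)‖ ≤ c * ρ ^ (j - i + 1))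
    {a len : ℕ} (hlen : a + len ≤ N) : ‖prodE E a len‖ ≤ c * ρ ^ len := by
  cases len with
  | zero => simpa only [prodE, pow_zero, mul_one] using Matrix.l2_opNorm_one_le.trans hc
  | succ len => simpa only [Nat.add_sub_cancel_left] using h a (a + len) (by omega) (by omega)

noncomputable def sensitivityKernel (O : ℕ → Matrix (Fin n) (Fin n) ℝ)
    (G : ℕ → Matrix (Fin n) m ℝ) (T : Matrix (Fin n) m ℝ) (i k : ℕ) : Matrix (Fin n) m ℝ :=
  (∑ s ∈ range (min i k), prodE E (s + 1) (k - 1 - s) * O s * G s)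
    + if i + 1 ≤ k then prodE E (i + 1) (k - 1 - i) * T else 0

theorem norm_sensitivityKernel_le (O : ℕ → Matrix (Fin n) (Fin n) ℝ)
    (G : ℕ → Matrix (Fin n) m ℝ) (T : Matrix (Fin n) m ℝ) {i k : ℕ} {c CO CG CT ρ : ℝ}
    (hc : 0 ≤ c) (hCO : 0 ≤ CO) (hCG : 0 ≤ CG) (hρ0 : 0 < ρ) (hρ1 : ρ < 1)
    (hprod : ∀ a len, a + len ≤ k → ‖prodE E a len‖ ≤ c * ρ ^ len)
    (hO : ∀ s < k, ‖O s‖ ≤ CO) (hG : ∀ s < i, ‖G s‖ ≤ CG * ρ ^ (i - 1 - s)) (hT : ‖T‖ ≤ CT) :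
    ‖sensitivityKernel E O G T i k‖
      ≤ c * (CO * CG * (1 - ρ ^ 2)⁻¹ + CT * ρ⁻¹) * ρ ^ Nat.dist i k := by
  have hsum := norm_sum_range_min_mul_le_pow_dist (i := i) (k := k)
    (fun s => prodE E (s + 1) (k - 1 - s) * O s) G (mul_nonneg hc hCO) hCG hρ0.le hρ1
    (fun s hs => (Matrix.l2_opNorm_mul_le_of_le (hprod (s + 1) (k - 1 - s) (by omega))
      (hO s (by omega))).trans_eq (by ring))
    (fun s hs => hG s (by omega))
  have hCT : 0 ≤ CT := (norm_nonneg T).trans hT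
  have hite := norm_ite_le_pow_dist (i := i) (k := k) (mul_nonneg hc hCT) hρ0
    (fun hik =>
      (Matrix.l2_opNorm_mul_le_of_le (hprod (i + 1) (k - 1 - i) (by omega)) hT).trans_eq (by ring))
  calc ‖sensitivityKernel E O G T i k‖
      ≤ c * CO * CG * ((1 - ρ ^ 2)⁻¹ * ρ ^ Nat.dist i k) + c * CT * (ρ⁻¹ * ρ ^ Nat.dist i k) :=
        (norm_add_le _ _).trans (add_le_add hsum hite)
    _ = c * (CO * CG * (1 - ρ ^ 2)⁻¹ + CT * ρ⁻¹) * ρ ^ Nat.dist i k := by ring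

end ClosedLoop

section RiccatiBounds

variable {l m n : Type*} [Fintype l] [Fintype m] [Fintype n] [DecidableEq m] [DecidableEq n]

theorem norm_mul_inv_mul_transpose_le {X : Matrix l n ℝ} {W : Matrix n n ℝ} {Y : Matrix m n ℝ}
    {γ Υ : ℝ} (hX : ‖X‖ ≤ Υ) (hW : ‖W⁻¹‖ ≤ γ⁻¹) (hY : ‖Y‖ ≤ Υ) :
    ‖X * W⁻¹ * Yᵀ‖ ≤ Υ * γ⁻¹ * Υ :=
  Matrix.l2_opNorm_mul_le_of_le (Matrix.l2_opNorm_mul_le_of_le hX hW)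
    ((Matrix.l2_opNorm_transpose Y).trans_le hY)

theorem norm_feedback_le {W : Matrix m m ℝ} {B : Matrix n m ℝ} {K A : Matrix n n ℝ}
    {S : Matrix m n ℝ} {γ Υ Ybar : ℝ} (hW : ‖W⁻¹‖ ≤ γ⁻¹) (hB : ‖B‖ ≤ Υ) (hK : ‖K‖ ≤ Ybar)
    (hA : ‖A‖ ≤ Υ) (hS : ‖S‖ ≤ Υ) :
    ‖-(W⁻¹ * (Bᵀ * K * A + S))‖ ≤ γ⁻¹ * (Υ * Ybar * Υ + Υ) := by
  rw [norm_neg]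
  refine Matrix.l2_opNorm_mul_le_of_le hW ((norm_add_le _ _).trans (add_le_add ?_ hS))
  exact Matrix.l2_opNorm_mul_le_of_le
    (Matrix.l2_opNorm_mul_le_of_le ((Matrix.l2_opNorm_transpose B).trans_le hB) hK) hA

end RiccatiBounds

section SensitivityKernels

variable {nx nu nd : ℕ} {B : ℕ → Matrix (Fin nx) (Fin nu) ℝ} {W : ℕ → Matrix (Fin nu) (Fin nu) ℝ}
  {E : ℕ → Matrix (Fin nx) (Fin nx) ℝ} {N i k : ℕ} {γ Υ c ρ : ℝ}

theorem Umat_eq_sensitivityKernel (P : ℕ → Matrix (Fin nu) (Fin nx) ℝ)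
    (D1 : ℕ → Matrix (Fin nd) (Fin nx) ℝ) (D2 : ℕ → Matrix (Fin nd) (Fin nu) ℝ) (i k : ℕ) :
    Umat B W P E D1 D2 i k = sensitivityKernel E (Okm B W)
      (fun s => (Mmat D1 D2 P E i (s + 1))ᵀ) (-(B i * (W i)⁻¹ * (D2 i)ᵀ)) i k := by
  unfold Umat sensitivityKernel
  split_ifs
  · rw [sub_eq_add_neg, Matrix.mul_neg, ← Matrix.mul_assoc, ← Matrix.mul_assoc]
  · rw [sub_zero, add_zero]

theorem Fmat_eq_sensitivityKernel (K : ℕ → Matrix (Fin nx) (Fin nx) ℝ) (i k : ℕ) :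
    Fmat B W K E i k = sensitivityKernel E (Okm B W)
      (fun s => (Vmat K E i (s + 1))ᵀ) (1 - Okm B W i * K (i + 1)) i k :=
  rfl

theorem norm_Umat_le {P : ℕ → Matrix (Fin nu) (Fin nx) ℝ} {D1 : ℕ → Matrix (Fin nd) (Fin nx) ℝ}
    {D2 : ℕ → Matrix (Fin nd) (Fin nu) ℝ} {CP : ℝ} (hc : 0 ≤ c) (hρ0 : 0 < ρ) (hρ1 : ρ < 1)
    (hprod : ∀ a len, a + len ≤ N → ‖prodE E a len‖ ≤ c * ρ ^ len)
    (hB : ∀ s < N, ‖B s‖ ≤ Υ) (hWinv : ∀ s < N, ‖(W s)⁻¹‖ ≤ γ⁻¹)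
    (hD1 : ‖D1 i‖ ≤ Υ) (hD2 : ‖D2 i‖ ≤ Υ) (hP : ‖P i‖ ≤ CP) (hi : i < N) (hk : k ≤ N) :
    ‖Umat B W P E D1 D2 i k‖
      ≤ c * (Υ * γ⁻¹ * Υ * ((Υ + Υ * CP) * c) * (1 - ρ ^ 2)⁻¹ + Υ * γ⁻¹ * Υ * ρ⁻¹)
        * ρ ^ Nat.dist i k := by
  have hΥ : 0 ≤ Υ := (norm_nonneg _).trans hD2
  have hγ : 0 ≤ γ⁻¹ := (norm_nonneg _).trans (hWinv i hi)
  have hCP : 0 ≤ CP := (norm_nonneg _).trans hP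
  have hM : ∀ s < i, ‖(Mmat D1 D2 P E i (s + 1))ᵀ‖ ≤ (Υ + Υ * CP) * c * ρ ^ (i - 1 - s) := by
    intro s hs
    rw [Matrix.l2_opNorm_transpose, Mmat, norm_neg, mul_assoc,
      show i - (s + 1) = i - 1 - s by omega]
    exact Matrix.l2_opNorm_mul_le_of_le
      ((norm_add_le _ _).trans (add_le_add hD1 (Matrix.l2_opNorm_mul_le_of_le hD2 hP)))
      (hprod _ _ (by omega))
  rw [Umat_eq_sensitivityKernel]
  refine norm_sensitivityKernel_le E _ _ _ hc (by positivity) (by positivity) hρ0 hρ1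
    (fun a len h => hprod a len (by omega))
    (fun s hs => norm_mul_inv_mul_transpose_le (hB s (by omega)) (hWinv s (by omega))
      (hB s (by omega))) hM ?_
  rw [norm_neg]
  exact norm_mul_inv_mul_transpose_le (hB i hi) (hWinv i hi) hD2

theorem norm_Fmat_le {K : ℕ → Matrix (Fin nx) (Fin nx) ℝ} {Ybar : ℝ} (hc : 0 ≤ c) (hρ0 : 0 < ρ)
    (hρ1 : ρ < 1) (hprod : ∀ a len, a + len ≤ N → ‖prodE E a len‖ ≤ c * ρ ^ len)
    (hB : ∀ s < N, ‖B s‖ ≤ Υ) (hWinv : ∀ s < N, ‖(W s)⁻¹‖ ≤ γ⁻¹)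
    (hK : ∀ s ≤ N, ‖K s‖ ≤ Ybar) (hi : i < N) (hk : k ≤ N) :
    ‖Fmat B W K E i k‖
      ≤ c * (Υ * γ⁻¹ * Υ * (Ybar * c) * (1 - ρ ^ 2)⁻¹ + (1 + Υ * γ⁻¹ * Υ * Ybar) * ρ⁻¹)
        * ρ ^ Nat.dist i k := by
  have hO : ∀ s < N, ‖Okm B W s‖ ≤ Υ * γ⁻¹ * Υ := fun s hs =>
    norm_mul_inv_mul_transpose_le (hB s hs) (hWinv s hs) (hB s hs)
  have hCO : 0 ≤ Υ * γ⁻¹ * Υ := (norm_nonneg _).trans (hO i hi)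
  have hYbar : 0 ≤ Ybar := (norm_nonneg _).trans (hK i hi.le)
  have hV : ∀ s < i, ‖(Vmat K E i (s + 1))ᵀ‖ ≤ Ybar * c * ρ ^ (i - 1 - s) := by
    intro s hs
    rw [Matrix.l2_opNorm_transpose, Vmat, norm_neg, mul_assoc]
    refine (Matrix.l2_opNorm_mul_le_of_le (hK (i + 1) hi)
      (hprod (s + 1) (i + 1 - (s + 1)) (by omega))).trans ?_
    gcongr _ * (_ * ?_)
    exact pow_le_pow_of_le_one hρ0.le hρ1.le (by omega)
  rw [Fmat_eq_sensitivityKernel]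
  exact norm_sensitivityKernel_le E _ _ _ hc hCO (by positivity) hρ0 hρ1
    (fun a len h => hprod a len (by omega)) (fun s hs => hO s (by omega)) hV
    ((norm_sub_le _ _).trans (add_le_add Matrix.l2_opNorm_one_le
      (Matrix.l2_opNorm_mul_le_of_le (hO i hi) (hK (i + 1) hi))))

end SensitivityKernels

/-- **Exponential decay of the sensitivity kernels (Lemma 6.4).**  Under the stated
bounds on the data, the Riccati quantities, and the closed-loop products, there is a
constant `Υ_{uf}` depending only on `(γ, Υ, Ῡ, Υ_E, ρ)` such that
`‖U_i^k‖, ‖F_i^k‖ ≤ Υ_{uf} ρ^{|i−k|}`. -/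
theorem sensitivity_kernel_decay
    (γ Υ Ybar ΥE ρ : ℝ)
    (hγ : 0 < γ) (hΥ : 0 < Υ) (hYbar : 0 < Ybar) (hΥE : 1 ≤ ΥE)
    (hρ0 : 0 < ρ) (hρ1 : ρ < 1) :
    ∃ Υuf : ℝ, 0 < Υuf ∧
      ∀ (N nx nu nd : ℕ), 1 ≤ N → 1 ≤ nx → 1 ≤ nu → 1 ≤ nd →
      ∀ (A : ℕ → Matrix (Fin nx) (Fin nx) ℝ) (B : ℕ → Matrix (Fin nx) (Fin nu) ℝ)
        (Q : ℕ → Matrix (Fin nx) (Fin nx) ℝ) (R : ℕ → Matrix (Fin nu) (Fin nu) ℝ)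
        (S : ℕ → Matrix (Fin nu) (Fin nx) ℝ)
        (D1 : ℕ → Matrix (Fin nd) (Fin nx) ℝ) (D2 : ℕ → Matrix (Fin nd) (Fin nu) ℝ),
      (∀ k ≤ N, (Q k).IsSymm) → (∀ k < N, (R k).IsSymm) →
      ∀ (K : ℕ → Matrix (Fin nx) (Fin nx) ℝ) (W : ℕ → Matrix (Fin nu) (Fin nu) ℝ)
        (P : ℕ → Matrix (Fin nu) (Fin nx) ℝ) (E : ℕ → Matrix (Fin nx) (Fin nx) ℝ),
      K N = Q N →
      (∀ k < N, W k = R k + (B k)ᵀ * K (k + 1) * B k) →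
      (∀ k < N, P k = -((W k)⁻¹ * ((B k)ᵀ * K (k + 1) * A k + S k))) →
      (∀ k < N, K k =
        Q k + (A k)ᵀ * K (k + 1) * A k
          - ((B k)ᵀ * K (k + 1) * A k + S k)ᵀ * (W k)⁻¹
              * ((B k)ᵀ * K (k + 1) * A k + S k)) →
      (∀ k < N, E k = A k + B k * P k) →
      (∀ k < N, opNorm (A k) ≤ Υ ∧ opNorm (B k) ≤ Υ ∧ opNorm (R k) ≤ Υ ∧
        opNorm (S k) ≤ Υ ∧ opNorm (D1 k) ≤ Υ ∧ opNorm (D2 k) ≤ Υ) →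
      (∀ k < N, (W k - γ • (1 : Matrix (Fin nu) (Fin nu) ℝ)).PosSemidef) →
      (∀ k ≤ N, opNorm (K k) ≤ Ybar) →
      (∀ i j, i ≤ j → j < N → opNorm (prodE E i (j - i + 1)) ≤ ΥE * ρ ^ (j - i + 1)) →
      ∀ i < N, ∀ k ≤ N,
        opNorm (Umat B W P E D1 D2 i k) ≤ Υuf * ρ ^ (Nat.dist i k) ∧
        opNorm (Fmat B W K E i k) ≤ Υuf * ρ ^ (Nat.dist i k) := by
  set CO := Υ * γ⁻¹ * Υ
  set CP := γ⁻¹ * (Υ * Ybar * Υ + Υ)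
  set q := (1 - ρ ^ 2)⁻¹
  have hq : 0 < q := inv_pos.mpr (by nlinarith)
  set CU := ΥE * (CO * ((Υ + Υ * CP) * ΥE) * q + CO * ρ⁻¹)
  set CF := ΥE * (CO * (Ybar * ΥE) * q + (1 + CO * Ybar) * ρ⁻¹)
  have hCU : 0 ≤ CU := by positivity
  have hCF : 0 < CF := by positivity
  refine ⟨CU + CF, by positivity, ?_⟩
  intro N nx nu nd _ _ _ _ A B Q R S D1 D2 _ _ K W P E _ _ hP _ _ hdata hW hK hE i hi k hk
  simp only [opNorm_eq_norm] at hdata hK hE ⊢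
  have hΥE0 : 0 ≤ ΥE := by linarith
  have hprod := fun a len => norm_prodE_le E hΥE hE (a := a) (len := len)
  have hWinv : ∀ s < N, ‖(W s)⁻¹‖ ≤ γ⁻¹ := fun s hs =>
    Matrix.l2_opNorm_inv_le_of_posSemidef hγ (hW s hs)
  have hB : ∀ s < N, ‖B s‖ ≤ Υ := fun s hs => (hdata s hs).2.1
  have hPi : ‖P i‖ ≤ CP := by
    rw [hP i hi]
    exact norm_feedback_le (hWinv i hi) (hB i hi) (hK (i + 1) hi) (hdata i hi).1
      (hdata i hi).2.2.2.1
  have hd : 0 ≤ ρ ^ Nat.dist i k := by positivity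
  exact ⟨(norm_Umat_le hΥE0 hρ0 hρ1 hprod hB hWinv (hdata i hi).2.2.2.2.1 (hdata i hi).2.2.2.2.2
      hPi hi hk).trans (mul_le_mul_of_nonneg_right (le_add_of_nonneg_right hCF.le) hd),
    (norm_Fmat_le hΥE0 hρ0 hρ1 hprod hB hWinv hK hi hk).trans
      (mul_le_mul_of_nonneg_right (le_add_of_nonneg_left hCU) hd)⟩
end
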